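/- arXiv:2303.01722 — 7 statements merged into one kernel-verified Lean document; each statement's English description precedes it below -/
import Mathlib

section
/- Let B_1, …, B_l be real symmetric n×n matrices satisfying B_iB_j = 0 for all i ≠ j, let G be a real symmetric n×n matrix, let X be a real symmetric n×n matrix, and let z ∈ ℝ^l. If X·(G − Σ_{j=1}^l z_j B_j) = 0 (the matrix product is the zero matrix), then for every i = 1, …, l one has z_i · Tr(B_i² X) = Tr(B_i X G). In particular, if Tr(B_i²X) ≠ 0 for all i, then z is uniquely determined by z_i = Tr(B_i X G)/Tr(B_i² X). -/
open Matrix BigOperators Finset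

/-!
Multiply the stationarity relation `X G = Σ_j z_j X B_j` on the left by `B_i` and take traces.
By cyclicity `Tr(B_i X B_j) = Tr(B_j B_i X)`, which vanishes for `j ≠ i` because the `B_j`
annihilate each other, so only the term `z_i Tr(B_i² X)` survives.
-/

namespace Matrix

variable {m ι R : Type*} [Fintype m] [Fintype ι] [CommRing R]

theorem trace_mul_mul_eq_zero_of_mul_eq_zero {A C : Matrix m m R} (h : C * A = 0)
    (X : Matrix m m R) : (A * X * C).trace = 0 := by
  rw [trace_mul_comm, ← Matrix.mul_assoc, h, Matrix.zero_mul, trace_zero]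

theorem trace_mul_mul_sum_smul_of_mul_eq_zero {B : ι → Matrix m m R}
    (hB : ∀ i j, i ≠ j → B i * B j = 0) (X : Matrix m m R) (z : ι → R) (i : ι) :
    (B i * X * ∑ j, z j • B j).trace = z i * (B i * B i * X).trace := by
  simp only [Matrix.mul_sum, Matrix.mul_smul, trace_sum, trace_smul, smul_eq_mul]
  rw [Finset.sum_eq_single i
    (fun j _ hji => by rw [trace_mul_mul_eq_zero_of_mul_eq_zero (hB j i hji), mul_zero])
    (fun hi => absurd (mem_univ i) hi), trace_mul_cycle]

end Matrix

theorem multiplier_formula_general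
    (n l : ℕ)
    (B : Fin l → Matrix (Fin n) (Fin n) ℝ)
    (hBB : ∀ i j, i ≠ j → B i * B j = 0)
    (G : Matrix (Fin n) (Fin n) ℝ)
    (X : Matrix (Fin n) (Fin n) ℝ)
    (z : Fin l → ℝ)
    (hXS : X * (G - ∑ j, z j • B j) = 0) :
    (∀ i, z i * (B i * B i * X).trace = (B i * X * G).trace) ∧
    ((∀ i, (B i * B i * X).trace ≠ 0) →
      ∀ i, z i = (B i * X * G).trace / (B i * B i * X).trace) := by
  have hXG : X * G = X * ∑ j, z j • B j := by
    rwa [Matrix.mul_sub, sub_eq_zero] at hXS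
  have key : ∀ i, z i * (B i * B i * X).trace = (B i * X * G).trace := fun i => by
    rw [Matrix.mul_assoc (B i) X G, hXG, ← Matrix.mul_assoc,
      trace_mul_mul_sum_smul_of_mul_eq_zero hBB]
  exact ⟨key, fun hne i => eq_div_of_mul_eq (hne i) (key i)⟩

/-- Closed-form Lagrange multiplier formula (Lemma 3.1): if `B_i B_j = 0` for `i ≠ j`
and `X·(G − Σ z j • B j) = 0`, then `z i * Tr(B i² X) = Tr(B i X G)` for every `i`;
in particular, if `Tr(B i² X) ≠ 0` for all `i`, then `z i = Tr(B i X G)/Tr(B i² X)`. -/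
theorem multiplier_formula
    (n l : ℕ)
    (B : Fin l → Matrix (Fin n) (Fin n) ℝ) (hB : ∀ j, (B j).IsSymm)
    (hBB : ∀ i j, i ≠ j → B i * B j = 0)
    (G : Matrix (Fin n) (Fin n) ℝ) (hG : G.IsSymm)
    (X : Matrix (Fin n) (Fin n) ℝ) (hX : X.IsSymm)
    (z : Fin l → ℝ)
    (hXS : X * (G - ∑ j, z j • B j) = 0) :
    (∀ i, z i * (B i * B i * X).trace = (B i * X * G).trace) ∧
    ((∀ i, (B i * B i * X).trace ≠ 0) →
      ∀ i, z i = (B i * X * G).trace / (B i * B i * X).trace) :=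
  multiplier_formula_general n l B hBB G X z hXS
end

section
/- Let C, A_1, …, A_m, B_1, …, B_l be real symmetric n×n matrices, b, y ∈ ℝ^m, d ∈ ℝ^l, σ ≥ 0. Define Φ(X) = ⟨C, X⟩ − yᵀ(𝒜(X) − b) + (σ/2)‖𝒜(X) − b‖² with 𝒜(X) = (⟨A_i, X⟩)_i, and G(X) = C − Σ_i y_i A_i + σ Σ_i (⟨A_i, X⟩ − b_i) A_i. Let ℳ = {X : X positive semidefinite, ⟨B_j, X⟩ = d_j for j = 1, …, l}. Suppose X ∈ ℳ and there exists z ∈ ℝ^l such that S := G(X) − Σ_{j=1}^l z_j B_j is positive semidefinite and X·S = 0. Then X minimizes Φ over ℳ: Φ(X′) ≥ Φ(X) for all X′ ∈ ℳ. -/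
open Matrix BigOperators Finset

lemma psd_trace_nonneg {n : ℕ} {M : Matrix (Fin n) (Fin n) ℝ} (hM : M.PosSemidef) :
    0 ≤ M.trace := by
  have h : ∀ i, 0 ≤ M i i := by
    intro i
    exact hM.diag_nonneg
  exact Finset.sum_nonneg fun i _ => h i

open scoped MatrixOrder in
lemma psd_trace_mul_nonneg {n : ℕ} {S X : Matrix (Fin n) (Fin n) ℝ}
    (hS : S.PosSemidef) (hX : X.PosSemidef) : 0 ≤ (S * X).trace := by
  have h1 : CFC.sqrt X * CFC.sqrt X = X := CFC.sqrt_mul_sqrt_self X hX.nonneg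
  have hherm : (CFC.sqrt X)ᴴ = CFC.sqrt X := (CFC.sqrt_nonneg X).posSemidef.isHermitian
  have key : (S * X).trace = (CFC.sqrt X * S * CFC.sqrt X).trace := by
    conv_lhs => rw [← h1]
    rw [← Matrix.mul_assoc, Matrix.trace_mul_cycle]
  rw [key]
  have := hS.mul_mul_conjTranspose_same (CFC.sqrt X)
  rw [hherm] at this
  exact psd_trace_nonneg this


/-- Sufficiency direction of the optimality characterization of the ALM subproblem
(Lemma 3.1 / Corollary 3.2): if `X ∈ ℳ = {X ⪰ 0 : ⟨B j, X⟩ = d j}` and there is `z`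
with `S = G(X) − Σ z j • B j ⪰ 0` and `X·S = 0`, then `X` minimizes the augmented
Lagrangian `Φ` over `ℳ`. Here `⟨A, B⟩ = Tr(AB)`. -/
theorem alm_subproblem_sufficiency
    (n m l : ℕ)
    (C : Matrix (Fin n) (Fin n) ℝ) (A : Fin m → Matrix (Fin n) (Fin n) ℝ)
    (B : Fin l → Matrix (Fin n) (Fin n) ℝ)
    (b y : Fin m → ℝ) (d : Fin l → ℝ) (σ : ℝ) (hσ : 0 ≤ σ)
    (hC : C.IsSymm) (hA : ∀ i, (A i).IsSymm) (hB : ∀ j, (B j).IsSymm)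
    (Φ : Matrix (Fin n) (Fin n) ℝ → ℝ)
    (hΦ : ∀ X, Φ X = (C * X).trace - (∑ i, y i * ((A i * X).trace - b i)) +
      σ / 2 * ∑ i, ((A i * X).trace - b i) ^ 2)
    (G : Matrix (Fin n) (Fin n) ℝ → Matrix (Fin n) (Fin n) ℝ)
    (hG : ∀ X, G X = C - (∑ i, y i • A i) + σ • ∑ i, ((A i * X).trace - b i) • A i)
    (X : Matrix (Fin n) (Fin n) ℝ)
    (hX : X.PosSemidef) (hXB : ∀ j, (B j * X).trace = d j)
    (z : Fin l → ℝ)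
    (S : Matrix (Fin n) (Fin n) ℝ)
    (hS : S = G X - ∑ j, z j • B j)
    (hSpsd : S.PosSemidef)
    (hXS : X * S = 0) :
    ∀ X' : Matrix (Fin n) (Fin n) ℝ, X'.PosSemidef →
      (∀ j, (B j * X').trace = d j) → Φ X ≤ Φ X' := by
  intro X' hX' hXB'
  set u : Fin m → ℝ := fun i => (A i * X').trace with hu
  set v : Fin m → ℝ := fun i => (A i * X).trace with hv
  -- trace of G X * (X' - X)
  have hAd : ∀ i, (A i * (X' - X)).trace = u i - v i := fun i => by
    rw [Matrix.mul_sub, Matrix.trace_sub]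
  have hGtr : ((G X) * (X' - X)).trace =
      ((C * X').trace - (C * X).trace) - (∑ i, y i * (u i - v i))
        + σ * ∑ i, (v i - b i) * (u i - v i) := by
    rw [hG]
    simp only [Matrix.sub_mul, Matrix.add_mul, Matrix.sum_mul, Matrix.smul_mul,
      Matrix.trace_add, Matrix.trace_sub, Matrix.trace_sum, Matrix.trace_smul,
      smul_eq_mul, hAd]
    rw [Matrix.mul_sub, Matrix.trace_sub]
  -- trace of B j * (X' - X) = 0
  have hBtr : ∀ j, ((B j) * (X' - X)).trace = 0 := fun j => by
    rw [Matrix.mul_sub, Matrix.trace_sub, hXB j, hXB' j, sub_self]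
  -- G X * (X'-X) trace = S * (X'-X) trace
  have hGS : ((G X) * (X' - X)).trace = (S * (X' - X)).trace := by
    rw [hS, Matrix.sub_mul, Matrix.trace_sub, Matrix.sum_mul, Matrix.trace_sum]
    simp only [Matrix.smul_mul, Matrix.trace_smul, smul_eq_mul]
    rw [Finset.sum_congr rfl fun j _ => by rw [hBtr j, mul_zero]]
    simp
  -- trace S X = 0
  have hSX : (S * X).trace = 0 := by
    rw [Matrix.trace_mul_comm, hXS, Matrix.trace_zero]
  have hSX' : 0 ≤ (S * X').trace := psd_trace_mul_nonneg hSpsd hX'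
  have htr : 0 ≤ ((G X) * (X' - X)).trace := by
    rw [hGS, Matrix.mul_sub, Matrix.trace_sub, hSX, sub_zero]
    exact hSX'
  -- convexity
  have hconv : ∀ i ∈ Finset.univ (α := Fin m),
      σ * ((v i - b i) * (u i - v i)) ≤ σ/2 * ((u i - b i)^2 - (v i - b i)^2) := by
    intro i _
    nlinarith [sq_nonneg (u i - v i), hσ, mul_nonneg hσ (sq_nonneg (u i - v i))]
  have hsum := Finset.sum_le_sum hconv
  rw [hΦ, hΦ]
  have e1 : ∑ i, σ * ((v i - b i) * (u i - v i)) = σ * ∑ i, (v i - b i) * (u i - v i) := by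
    rw [Finset.mul_sum]
  have e2 : ∑ i, σ/2 * ((u i - b i)^2 - (v i - b i)^2)
      = σ/2 * (∑ i, (u i - b i)^2) - σ/2 * (∑ i, (v i - b i)^2) := by
    simp only [mul_sub]
    rw [Finset.sum_sub_distrib, ← Finset.mul_sum, ← Finset.mul_sum]
  rw [e1, e2] at hsum
  have e3 : (∑ i, y i * (u i - b i)) - (∑ i, y i * (v i - b i)) = ∑ i, y i * (u i - v i) := by
    rw [← Finset.sum_sub_distrib]
    exact Finset.sum_congr rfl fun i _ => by ring
  have := hGtr ▸ htr
  linarith [this, hsum, e3.ge, e3.le]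
end

section
/- Let C, A_1, …, A_m, B_1, …, B_l be real symmetric n×n matrices, b, y ∈ ℝ^m, d ∈ ℝ^l, σ ≥ 0, and p ∈ ℕ. Define Φ(X) = ⟨C, X⟩ − yᵀ(𝒜(X) − b) + (σ/2)‖𝒜(X) − b‖² with 𝒜(X) = (⟨A_i, X⟩)_i, G(X) = C − Σ_i y_i A_i + σ Σ_i (⟨A_i, X⟩ − b_i) A_i, and Ψ(Y) = Φ(YYᵀ) for Y ∈ ℝ^{n×p}. Let 𝒩_p = {Y ∈ ℝ^{n×p} : ⟨B_j, YYᵀ⟩ = d_j for j = 1, …, l}. Suppose Y ∈ 𝒩_p, X = YYᵀ, and there exists z ∈ ℝ^l such that S := G(X) − Σ_{j=1}^l z_j B_j is positive semidefinite and X·S = 0. Then Y is a global minimizer of Ψ over 𝒩_p: Ψ(Y′) ≥ Ψ(Y) for all Y′ ∈ 𝒩_p. -/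
open Matrix BigOperators Finset

/-- Global-optimality certificate for the Burer–Monteiro factorized subproblem
(Proposition 4.1): if `Y ∈ 𝒩_p = {Y : ⟨B j, YYᵀ⟩ = d j}`, `X = YYᵀ`, and there is `z`
with `S = G(X) − Σ z j • B j ⪰ 0` and `X·S = 0`, then `Y` is a global minimizer of
`Ψ(Y) = Φ(YYᵀ)` over `𝒩_p`. Here `⟨A, B⟩ = Tr(AB)`. -/
theorem factorized_subproblem_global_optimality
    (n m l p : ℕ)
    (C : Matrix (Fin n) (Fin n) ℝ) (A : Fin m → Matrix (Fin n) (Fin n) ℝ)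
    (B : Fin l → Matrix (Fin n) (Fin n) ℝ)
    (b y : Fin m → ℝ) (d : Fin l → ℝ) (σ : ℝ) (hσ : 0 ≤ σ)
    (hC : C.IsSymm) (hA : ∀ i, (A i).IsSymm) (hB : ∀ j, (B j).IsSymm)
    (Φ : Matrix (Fin n) (Fin n) ℝ → ℝ)
    (hΦ : ∀ X, Φ X = (C * X).trace - (∑ i, y i * ((A i * X).trace - b i)) +
      σ / 2 * ∑ i, ((A i * X).trace - b i) ^ 2)
    (G : Matrix (Fin n) (Fin n) ℝ → Matrix (Fin n) (Fin n) ℝ)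
    (hG : ∀ X, G X = C - (∑ i, y i • A i) + σ • ∑ i, ((A i * X).trace - b i) • A i)
    (Ψ : Matrix (Fin n) (Fin p) ℝ → ℝ)
    (hΨ : ∀ Y, Ψ Y = Φ (Y * Yᵀ))
    (Y : Matrix (Fin n) (Fin p) ℝ)
    (hY : ∀ j, (B j * (Y * Yᵀ)).trace = d j)
    (X : Matrix (Fin n) (Fin n) ℝ) (hX : X = Y * Yᵀ)
    (z : Fin l → ℝ)
    (S : Matrix (Fin n) (Fin n) ℝ)
    (hS : S = G X - ∑ j, z j • B j)
    (hSpsd : S.PosSemidef)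
    (hXS : X * S = 0) :
    ∀ Y' : Matrix (Fin n) (Fin p) ℝ,
      (∀ j, (B j * (Y' * Y'ᵀ)).trace = d j) → Ψ Y ≤ Ψ Y' := by
  intro Y' hY'
  set X' := Y' * Y'ᵀ with hX'
  -- trace of G X * M
  have hGin : ∀ M : Matrix (Fin n) (Fin n) ℝ,
      (G X * M).trace = (C * M).trace - (∑ i, y i * (A i * M).trace)
        + σ * ∑ i, ((A i * X).trace - b i) * (A i * M).trace := by
    intro M
    rw [hG]
    simp only [Matrix.sub_mul, Matrix.add_mul, Matrix.sum_mul, Matrix.smul_mul,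
      Matrix.trace_sub, Matrix.trace_add, Matrix.trace_sum, Matrix.trace_smul,
      smul_eq_mul, Finset.mul_sum]
  -- trace of S * M
  have hSin : ∀ M : Matrix (Fin n) (Fin n) ℝ,
      (S * M).trace = (G X * M).trace - ∑ j, z j * (B j * M).trace := by
    intro M
    rw [hS]
    simp only [Matrix.sub_mul, Matrix.sum_mul, Matrix.smul_mul, Matrix.trace_sub,
      Matrix.trace_sum, Matrix.trace_smul, smul_eq_mul]
  -- tr(S X) = 0
  have hSX : (S * X).trace = 0 := by
    rw [Matrix.trace_mul_comm, hXS, Matrix.trace_zero]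
  -- tr(S X') ≥ 0
  have hpos : 0 ≤ (S * X').trace := by
    rw [hX', ← Matrix.mul_assoc, Matrix.trace_mul_comm, Matrix.trace]
    apply Finset.sum_nonneg
    intro k _
    have h := hSpsd.dotProduct_mulVec_nonneg (fun i => Y' i k)
    simpa [Matrix.mul_apply, Matrix.mulVec, dotProduct, Matrix.diag,
      mul_comm, mul_left_comm] using h
  -- difference of gradient pairings
  have hdiff : (G X * X').trace - (G X * X).trace = (S * X').trace := by
    have h1 := hSin X'
    have h2 := hSin X
    have h3 : ∀ j, (B j * X').trace = (B j * X).trace := by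
      intro j; rw [hX, hX', hY j, hY' j]
    have h4 : (∑ j, z j * (B j * X').trace) = ∑ j, z j * (B j * X).trace := by
      exact Finset.sum_congr rfl fun j _ => by rw [h3 j]
    linarith [h1, h2, h4, hSX]
  -- key convexity identity
  have key : Ψ Y' - Ψ Y - ((G X * X').trace - (G X * X).trace)
      = σ / 2 * ∑ i, ((A i * X').trace - (A i * X).trace) ^ 2 := by
    rw [hΨ, hΨ, hΦ, hΦ, hGin, hGin, ← hX', ← hX]
    have hsum : ∀ (f g : Fin m → ℝ), (∑ i, f i) - (∑ i, g i) = ∑ i, (f i - g i) :=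
      fun f g => (Finset.sum_sub_distrib f g).symm
    simp only [Finset.mul_sum]
    rw [show ∀ a1 s1 t1 a2 s2 t2 u1 v1 u2 v2 : ℝ,
      (a1 - s1 + t1) - (a2 - s2 + t2) - ((a1 - u1 + v1) - (a2 - u2 + v2))
      = (t1 - t2) - (v1 - v2) - ((s1 - s2) - (u1 - u2)) from fun _ _ _ _ _ _ _ _ _ _ => by ring]
    rw [hsum, hsum, hsum, hsum, hsum, ← Finset.sum_sub_distrib, ← Finset.sum_sub_distrib]
    apply Finset.sum_congr rfl
    intro i _
    ring
  have hsq : 0 ≤ σ / 2 * ∑ i, ((A i * X').trace - (A i * X).trace) ^ 2 := by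
    apply mul_nonneg (by linarith)
    exact Finset.sum_nonneg fun i _ => sq_nonneg _
  rw [hdiff] at key
  linarith
end

section
/- Let B_1, …, B_l be real symmetric n×n matrices with B_iB_j = 0 for all i ≠ j, and let Y ∈ ℝ^{n×p} be such that Tr(B_j²YYᵀ) ≠ 0 for every j = 1, …, l. For U ∈ ℝ^{n×p} define u_j = Tr(B_j U Yᵀ)/Tr(B_j² YYᵀ) and P(U) = U − Σ_{j=1}^l u_j B_j Y. Then: (a) Tr(B_j P(U) Yᵀ) = 0 for every j = 1, …, l, i.e., P(U) lies in the tangent set T = {V ∈ ℝ^{n×p} : Tr(B_j V Yᵀ) = 0 for all j}; and (b) ⟨U − P(U), V⟩ = 0 for every V ∈ T, where ⟨A, B⟩ = Tr(AᵀB). Consequently P(U) is the orthogonal projection of U onto T, and U − P(U) lies in the span of {B_1Y, …, B_lY}. -/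
open Matrix BigOperators Finset

/-!
Since `B i * B j = 0` for `i ≠ j`, the `j`-th constraint `Tr(B_j V Yᵀ)` sees only the `j`-th
term of the correction `∑ u_i • B_i Y`, and `u_j` is exactly the coefficient that cancels it.
Symmetry of `B_j` identifies `⟨B_j Y, V⟩` with `Tr(B_j V Yᵀ)`, so the correction is orthogonal
to every `V` satisfying the constraints.
-/

namespace Matrix

variable {R ι m k : Type*} [CommSemiring R] [Fintype ι] [Fintype m] [Fintype k]

theorem trace_mul_sum_smul_mul_of_mul_eq_zero {B : ι → Matrix m m R}
    (hBB : ∀ i j, i ≠ j → B i * B j = 0) (Y : Matrix m k R) (X : Matrix k m R) (c : ι → R)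
    (j : ι) :
    (B j * (∑ i, c i • (B i * Y)) * X).trace = c j * (B j * B j * (Y * X)).trace := by
  have hterm : ∀ i, (B j * (c i • (B i * Y)) * X).trace = c i * (B j * B i * (Y * X)).trace := by
    intro i
    rw [Matrix.mul_smul, Matrix.smul_mul, trace_smul, smul_eq_mul, ← Matrix.mul_assoc,
      Matrix.mul_assoc (B j * B i)]
  rw [Matrix.mul_sum, Matrix.sum_mul, trace_sum, Finset.sum_congr rfl fun i _ => hterm i]
  refine Finset.sum_eq_single j (fun i _ hij => ?_) (fun hj => absurd (mem_univ j) hj)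
  rw [hBB j i (Ne.symm hij), Matrix.zero_mul, trace_zero, mul_zero]

theorem trace_transpose_mul_of_isSymm {B : Matrix m m R} (hB : B.IsSymm) (Y V : Matrix m k R) :
    ((B * Y)ᵀ * V).trace = (B * V * Yᵀ).trace := by
  rw [transpose_mul, hB.eq, Matrix.mul_assoc, trace_mul_comm]

theorem trace_transpose_sum_smul_mul_of_isSymm {B : ι → Matrix m m R} (hB : ∀ j, (B j).IsSymm)
    (Y V : Matrix m k R) (c : ι → R) :
    ((∑ j, c j • (B j * Y))ᵀ * V).trace = ∑ j, c j * (B j * V * Yᵀ).trace := by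
  simp only [transpose_sum, transpose_smul, Matrix.sum_mul, Matrix.smul_mul, trace_sum,
    trace_smul, smul_eq_mul, trace_transpose_mul_of_isSymm (hB _)]

end Matrix

/-- Lemma 4.3: explicit orthogonal projector onto the tangent space
`T = {V : Tr(B j V Yᵀ) = 0 for all j}` under the pairwise-annihilation assumption
`B i * B j = 0 (i ≠ j)` and nondegeneracy `Tr(B j² YYᵀ) ≠ 0`. The inner product on
`ℝ^{n×p}` is `⟨A, B⟩ = Tr(AᵀB)`. -/
theorem tangent_space_projection
    (n p l : ℕ)
    (B : Fin l → Matrix (Fin n) (Fin n) ℝ) (hB : ∀ j, (B j).IsSymm)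
    (hBB : ∀ i j, i ≠ j → B i * B j = 0)
    (Y : Matrix (Fin n) (Fin p) ℝ)
    (hY : ∀ j, (B j * B j * (Y * Yᵀ)).trace ≠ 0)
    (U : Matrix (Fin n) (Fin p) ℝ)
    (u : Fin l → ℝ)
    (hu : ∀ j, u j = (B j * U * Yᵀ).trace / (B j * B j * (Y * Yᵀ)).trace)
    (P : Matrix (Fin n) (Fin p) ℝ)
    (hP : P = U - ∑ j, u j • (B j * Y)) :
    (∀ j, (B j * P * Yᵀ).trace = 0) ∧
    (∀ V : Matrix (Fin n) (Fin p) ℝ,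
      (∀ j, (B j * V * Yᵀ).trace = 0) → ((U - P)ᵀ * V).trace = 0) ∧
    (U - P) ∈ Submodule.span ℝ (Set.range fun j => B j * Y) := by
  have hUP : U - P = ∑ j, u j • (B j * Y) := by rw [hP, sub_sub_cancel]
  refine ⟨fun j => ?_, fun V hV => ?_, ?_⟩
  · rw [hP, Matrix.mul_sub, Matrix.sub_mul, trace_sub,
      trace_mul_sum_smul_mul_of_mul_eq_zero hBB, hu j, div_mul_cancel₀ _ (hY j), sub_self]
  · simp only [hUP, trace_transpose_sum_smul_mul_of_isSymm hB, hV, mul_zero, sum_const_zero]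
  · rw [hUP]
    exact (Submodule.mem_span_range_iff_exists_fun ℝ).2 ⟨u, rfl⟩
end

section
/- Let C, A_1, …, A_m, B_1, …, B_l be real symmetric n×n matrices, b, y ∈ ℝ^m, σ ∈ ℝ, z ∈ ℝ^l, and Y, U ∈ ℝ^{n×p}. Define Φ(X) = ⟨C, X⟩ − yᵀ(𝒜(X) − b) + (σ/2)‖𝒜(X) − b‖² with 𝒜(X) = (⟨A_i, X⟩)_i, set X = YYᵀ, G = C − Σ_i y_i A_i + σ Σ_i (⟨A_i, X⟩ − b_i)A_i, and S = G − Σ_{j=1}^l z_j B_j. If Tr(B_j U Yᵀ) = 0 for every j = 1, …, l (i.e., U is in the tangent set at Y), then the function t ↦ Φ((Y + tU)(Y + tU)ᵀ) is differentiable at t = 0 with derivative 2·Tr(Uᵀ S Y). -/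
open Matrix BigOperators Finset

lemma tr_swap {n p : ℕ} (M : Matrix (Fin n) (Fin n) ℝ) (hM : M.IsSymm)
    (Y U : Matrix (Fin n) (Fin p) ℝ) :
    (M * (Y * Uᵀ)).trace = (M * (U * Yᵀ)).trace := by
  have h : (M * (Y * Uᵀ))ᵀ = U * Yᵀ * M := by
    rw [Matrix.transpose_mul, Matrix.transpose_mul, Matrix.transpose_transpose, hM.eq,
      Matrix.mul_assoc]
  rw [← Matrix.trace_transpose (M * (Y * Uᵀ)), h, Matrix.trace_mul_comm]

lemma quad_deriv (c0 c1 c2 : ℝ) :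
    HasDerivAt (fun t : ℝ => c0 + c1 * t + c2 * t ^ 2) c1 0 := by
  have h : HasDerivAt (fun t : ℝ => c0 + c1 * t + c2 * t ^ 2)
      (0 + c1 * 1 + c2 * (2 * 0 ^ 1)) 0 :=
    ((hasDerivAt_const 0 c0).add ((hasDerivAt_id 0).const_mul c1)).add
      ((hasDerivAt_pow 2 0).const_mul c2)
  simpa using h

lemma trace_deriv {n p : ℕ} (M : Matrix (Fin n) (Fin n) ℝ) (hM : M.IsSymm)
    (Y U : Matrix (Fin n) (Fin p) ℝ) :
    HasDerivAt (fun t : ℝ => (M * ((Y + t • U) * (Y + t • U)ᵀ)).trace)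
      (2 * (M * U * Yᵀ).trace) 0 := by
  have hfun : (fun t : ℝ => (M * ((Y + t • U) * (Y + t • U)ᵀ)).trace)
      = fun t : ℝ => (M * (Y * Yᵀ)).trace
        + (2 * (M * U * Yᵀ).trace) * t + (M * (U * Uᵀ)).trace * t ^ 2 := by
    funext t
    have hswap := tr_swap M hM Y U
    simp only [Matrix.transpose_add, Matrix.transpose_smul, Matrix.add_mul, Matrix.mul_add,
      Matrix.mul_smul, Matrix.smul_mul, Matrix.trace_add, Matrix.trace_smul, smul_smul,
      smul_eq_mul, Matrix.mul_assoc] at *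
    rw [hswap]; ring
  rw [hfun]
  exact quad_deriv _ _ _

/-- Riemannian-gradient formula (Proposition 4.4) expressed as a directional derivative:
if `U` is tangent at `Y` (i.e. `Tr(B j U Yᵀ) = 0` for all `j`), then
`t ↦ Φ((Y + tU)(Y + tU)ᵀ)` is differentiable at `t = 0` with derivative `2 Tr(Uᵀ S Y)`,
where `S = G − Σ z j • B j` and `G = ∇Φ(YYᵀ)`. Here `⟨A, B⟩ = Tr(AB)`. -/
theorem riemannian_gradient_directional_derivative
    (n m l p : ℕ)
    (C : Matrix (Fin n) (Fin n) ℝ) (A : Fin m → Matrix (Fin n) (Fin n) ℝ)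
    (B : Fin l → Matrix (Fin n) (Fin n) ℝ)
    (b y : Fin m → ℝ) (σ : ℝ) (z : Fin l → ℝ)
    (hC : C.IsSymm) (hA : ∀ i, (A i).IsSymm) (hB : ∀ j, (B j).IsSymm)
    (Y U : Matrix (Fin n) (Fin p) ℝ)
    (Φ : Matrix (Fin n) (Fin n) ℝ → ℝ)
    (hΦ : ∀ X, Φ X = (C * X).trace - (∑ i, y i * ((A i * X).trace - b i)) +
      σ / 2 * ∑ i, ((A i * X).trace - b i) ^ 2)
    (X : Matrix (Fin n) (Fin n) ℝ) (hX : X = Y * Yᵀ)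
    (G : Matrix (Fin n) (Fin n) ℝ)
    (hG : G = C - (∑ i, y i • A i) + σ • ∑ i, ((A i * X).trace - b i) • A i)
    (S : Matrix (Fin n) (Fin n) ℝ)
    (hS : S = G - ∑ j, z j • B j)
    (hU : ∀ j, (B j * U * Yᵀ).trace = 0) :
    HasDerivAt (fun t : ℝ => Φ ((Y + t • U) * (Y + t • U)ᵀ))
      (2 * (Uᵀ * S * Y).trace) 0 := by
  simp only [hΦ]
  have hval : ∀ i : Fin m, ((A i * ((Y + (0:ℝ) • U) * (Y + (0:ℝ) • U)ᵀ)).trace - b i)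
      = ((A i * X).trace - b i) := by
    intro i; simp [hX, Matrix.mul_assoc]
  have hC' := trace_deriv C hC Y U
  have hAi : ∀ i : Fin m, HasDerivAt
      (fun t : ℝ => (A i * ((Y + t • U) * (Y + t • U)ᵀ)).trace - b i)
      (2 * (A i * U * Yᵀ).trace) 0 := fun i => (trace_deriv (A i) (hA i) Y U).sub_const (b i)
  have hsum1 : HasDerivAt
      (fun t : ℝ => ∑ i, y i * ((A i * ((Y + t • U) * (Y + t • U)ᵀ)).trace - b i))
      (∑ i, y i * (2 * (A i * U * Yᵀ).trace)) 0 :=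
    HasDerivAt.fun_sum fun i _ => (hAi i).const_mul (y i)
  have hsq : ∀ i : Fin m, HasDerivAt
      (fun t : ℝ => ((A i * ((Y + t • U) * (Y + t • U)ᵀ)).trace - b i) ^ 2)
      (2 * ((A i * X).trace - b i) * (2 * (A i * U * Yᵀ).trace)) 0 := by
    intro i
    have h := (hAi i).fun_pow 2
    simp only [Nat.cast_ofNat, pow_one] at h
    rw [← hval i]
    refine h.congr_deriv ?_
    push_cast
    ring
  have hsum2 : HasDerivAt
      (fun t : ℝ => σ / 2 * ∑ i, ((A i * ((Y + t • U) * (Y + t • U)ᵀ)).trace - b i) ^ 2)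
      (σ / 2 * ∑ i, 2 * ((A i * X).trace - b i) * (2 * (A i * U * Yᵀ).trace)) 0 :=
    (HasDerivAt.fun_sum fun i _ => hsq i).const_mul (σ / 2)
  have hmain := (hC'.fun_sub hsum1).fun_add hsum2
  refine hmain.congr_deriv ?_
  have sumsymm : ∀ {k : ℕ} (c : Fin k → ℝ) (M : Fin k → Matrix (Fin n) (Fin n) ℝ),
      (∀ i, (M i).IsSymm) → (∑ i, c i • M i).IsSymm := by
    intro k c M h
    show (∑ i, c i • M i)ᵀ = ∑ i, c i • M i
    rw [Matrix.transpose_sum]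
    exact Finset.sum_congr rfl fun i _ => by rw [Matrix.transpose_smul, (h i).eq]
  have hSsymm : S.IsSymm := by
    rw [hS, hG]
    exact ((hC.sub (sumsymm y A hA)).add
      ((sumsymm (fun i => (A i * X).trace - b i) A hA).smul _)).sub (sumsymm z B hB)
  have key : (Uᵀ * S * Y).trace = (S * U * Yᵀ).trace := by
    rw [Matrix.trace_mul_cycle, Matrix.trace_mul_comm, tr_swap S hSsymm Y U, ← Matrix.mul_assoc]
  have hSU : (S * U * Yᵀ).trace = (C * U * Yᵀ).trace - (∑ i, y i * (A i * U * Yᵀ).trace)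
      + σ * ∑ i, ((A i * X).trace - b i) * (A i * U * Yᵀ).trace := by
    rw [hS, hG]
    simp [Matrix.sub_mul, Matrix.add_mul, Matrix.sum_mul, Matrix.smul_mul,
      Matrix.trace_smul, hU, Finset.mul_sum]
  have e1 : ∑ i, y i * (2 * (A i * U * Yᵀ).trace) = 2 * ∑ i, y i * (A i * U * Yᵀ).trace := by
    rw [Finset.mul_sum]; exact Finset.sum_congr rfl fun i _ => by ring
  have e2 : ∑ i, 2 * ((A i * X).trace - b i) * (2 * (A i * U * Yᵀ).trace)
      = 4 * ∑ i, ((A i * X).trace - b i) * (A i * U * Yᵀ).trace := by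
    rw [Finset.mul_sum]; exact Finset.sum_congr rfl fun i _ => by ring
  rw [key, hSU, e1, e2]
  ring
end

section
/- Let C, A_1, …, A_m be real symmetric n×n matrices, b, y ∈ ℝ^m, σ ≥ 0. Define Φ(X) = ⟨C, X⟩ − yᵀ(𝒜(X) − b) + (σ/2)‖𝒜(X) − b‖² with 𝒜(X) = (⟨A_i, X⟩)_i. Let Y ∈ ℝ^{n×p}, X = YYᵀ, S = C − Σ_i y_i A_i + σ Σ_i (⟨A_i, X⟩ − b_i)A_i, and let v ∈ ℝⁿ satisfy vᵀSv < 0. For t ∈ ℝ let Y_t = [Y, tv] ∈ ℝ^{n×(p+1)} denote the matrix obtained by appending the column tv to Y. Then for all t: Φ(Y_tY_tᵀ) = Φ(X) + t²·vᵀSv + (σ/2)t⁴‖𝒜(vvᵀ)‖², and consequently there exists ε > 0 such that Φ(Y_tY_tᵀ) < Φ(X) for all t with 0 < |t| < ε. -/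
/-!
Appending the column `t v` changes `Y Yᵀ` by the rank-one term `t² v vᵀ`. The augmented
Lagrangian is a quadratic polynomial in `X` with gradient `S`, so its Taylor expansion along
`v vᵀ` is exact: the first-order term is `t² ⟨S, v vᵀ⟩ = t² vᵀ S v < 0` and the second-order term
is `O(t⁴)`, which the first-order term dominates for small `t ≠ 0`.
-/

open Matrix BigOperators Finset

/-- Append a column `w` to an `n × p` matrix, producing an `n × (p+1)` matrix. -/
def appendCol {n p : ℕ} (Y : Matrix (Fin n) (Fin p) ℝ) (w : Fin n → ℝ) :
    Matrix (Fin n) (Fin (p + 1)) ℝ :=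
  Matrix.of fun i => Fin.snoc (Y i) (w i)

open Filter Topology

theorem appendCol_mul_transpose_appendCol {n p : ℕ} (Y : Matrix (Fin n) (Fin p) ℝ)
    (w : Fin n → ℝ) :
    appendCol Y w * (appendCol Y w)ᵀ = Y * Yᵀ + vecMulVec w w := by
  ext i j
  simp [appendCol, mul_apply, Fin.sum_univ_castSucc, vecMulVec_apply]

theorem dotProduct_mulVec_eq_trace_mul_vecMulVec {n : Type*} [Fintype n]
    (M : Matrix n n ℝ) (v : n → ℝ) :
    v ⬝ᵥ M *ᵥ v = (M * vecMulVec v v).trace := by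
  rw [mul_vecMulVec, trace_vecMulVec, dotProduct_comm]

section AugmentedLagrangian

variable {n ι : Type*} [Fintype n] [Fintype ι]
  (C : Matrix n n ℝ) (A : ι → Matrix n n ℝ) (b y : ι → ℝ) (σ : ℝ)

noncomputable def augLagrangian (X : Matrix n n ℝ) : ℝ :=
  (C * X).trace - (∑ i, y i * ((A i * X).trace - b i)) +
    σ / 2 * ∑ i, ((A i * X).trace - b i) ^ 2

def augLagrangianGrad (X : Matrix n n ℝ) : Matrix n n ℝ :=
  C - (∑ i, y i • A i) + σ • ∑ i, ((A i * X).trace - b i) • A i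

theorem augLagrangian_add_smul (X D : Matrix n n ℝ) (s : ℝ) :
    augLagrangian C A b y σ (X + s • D) =
      augLagrangian C A b y σ X + s * (augLagrangianGrad C A b y σ X * D).trace
        + σ / 2 * s ^ 2 * ∑ i, (A i * D).trace ^ 2 := by
  have htrace : ∀ M : Matrix n n ℝ, (M * (X + s • D)).trace = (M * X).trace + s * (M * D).trace :=
    fun M => by rw [Matrix.mul_add, Matrix.mul_smul, trace_add, trace_smul, smul_eq_mul]
  have hgrad : (augLagrangianGrad C A b y σ X * D).trace = (C * D).trace -
      ∑ i, y i * (A i * D).trace + σ * ∑ i, ((A i * X).trace - b i) * (A i * D).trace := by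
    simp only [augLagrangianGrad, sub_mul, add_mul, smul_mul, sum_mul, trace_sub, trace_add,
      trace_smul, trace_sum, smul_eq_mul]
  have hlin : ∑ i, y i * ((A i * X).trace + s * (A i * D).trace - b i) =
      ∑ i, y i * ((A i * X).trace - b i) + s * ∑ i, y i * (A i * D).trace := by
    rw [mul_sum, ← sum_add_distrib]; exact sum_congr rfl fun i _ => by ring
  have hsq : ∑ i, ((A i * X).trace + s * (A i * D).trace - b i) ^ 2 =
      ∑ i, ((A i * X).trace - b i) ^ 2
        + 2 * s * ∑ i, ((A i * X).trace - b i) * (A i * D).trace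
        + s ^ 2 * ∑ i, (A i * D).trace ^ 2 := by
    rw [mul_sum, mul_sum, ← sum_add_distrib, ← sum_add_distrib]
    exact sum_congr rfl fun i _ => by ring
  simp only [augLagrangian, htrace, hgrad, hlin, hsq]
  ring

end AugmentedLagrangian

theorem exists_forall_sq_mul_add_pow_four_mul_neg {q : ℝ} (hq : q < 0) (K : ℝ) :
    ∃ ε > 0, ∀ t : ℝ, 0 < |t| → |t| < ε → t ^ 2 * q + t ^ 4 * K < 0 := by
  have hnear : ∀ᶠ t in 𝓝 (0 : ℝ), q + t ^ 2 * K < 0 := by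
    have : Tendsto (fun t : ℝ => q + t ^ 2 * K) (𝓝 0) (𝓝 q) := by
      simpa using ((continuous_pow 2).mul continuous_const).const_add q |>.tendsto (0 : ℝ)
    exact this.eventually (gt_mem_nhds hq)
  obtain ⟨ε, hε, hball⟩ := Metric.eventually_nhds_iff.mp hnear
  refine ⟨ε, hε, fun t ht hte => ?_⟩
  have hneg : q + t ^ 2 * K < 0 := hball (by simpa [Real.dist_eq] using hte)
  have hsq : 0 < t ^ 2 := by have := abs_pos.mp ht; positivity
  calc t ^ 2 * q + t ^ 4 * K = t ^ 2 * (q + t ^ 2 * K) := by ring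
    _ < 0 := mul_neg_of_pos_of_neg hsq hneg

theorem escape_saddle_point_general
    (n m p : ℕ)
    (C : Matrix (Fin n) (Fin n) ℝ) (A : Fin m → Matrix (Fin n) (Fin n) ℝ)
    (b y : Fin m → ℝ) (σ : ℝ)
    (Φ : Matrix (Fin n) (Fin n) ℝ → ℝ)
    (hΦ : ∀ X, Φ X = (C * X).trace - (∑ i, y i * ((A i * X).trace - b i)) +
      σ / 2 * ∑ i, ((A i * X).trace - b i) ^ 2)
    (Y : Matrix (Fin n) (Fin p) ℝ)
    (X : Matrix (Fin n) (Fin n) ℝ) (hX : X = Y * Yᵀ)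
    (S : Matrix (Fin n) (Fin n) ℝ)
    (hS : S = C - (∑ i, y i • A i) + σ • ∑ i, ((A i * X).trace - b i) • A i)
    (v : Fin n → ℝ) (hv : v ⬝ᵥ (S *ᵥ v) < 0) :
    (∀ t : ℝ,
      Φ (appendCol Y (t • v) * (appendCol Y (t • v))ᵀ) =
        Φ X + t ^ 2 * (v ⬝ᵥ (S *ᵥ v))
          + σ / 2 * t ^ 4 * ∑ i, ((A i * Matrix.vecMulVec v v).trace) ^ 2) ∧
    ∃ ε > 0, ∀ t : ℝ, 0 < |t| → |t| < ε →
      Φ (appendCol Y (t • v) * (appendCol Y (t • v))ᵀ) < Φ X := by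
  have hΦ' : Φ = augLagrangian C A b y σ := funext hΦ
  have hS' : S = augLagrangianGrad C A b y σ X := hS
  have expansion : ∀ t : ℝ,
      Φ (appendCol Y (t • v) * (appendCol Y (t • v))ᵀ) =
        Φ X + t ^ 2 * (v ⬝ᵥ (S *ᵥ v))
          + σ / 2 * t ^ 4 * ∑ i, ((A i * Matrix.vecMulVec v v).trace) ^ 2 := by
    intro t
    rw [appendCol_mul_transpose_appendCol, ← hX, smul_vecMulVec, vecMulVec_smul, smul_smul, hΦ',
      augLagrangian_add_smul, dotProduct_mulVec_eq_trace_mul_vecMulVec, hS']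
    ring
  obtain ⟨ε, hε, hdescent⟩ := exists_forall_sq_mul_add_pow_four_mul_neg hv
    (σ / 2 * ∑ i, ((A i * Matrix.vecMulVec v v).trace) ^ 2)
  refine ⟨expansion, ε, hε, fun t ht hte => ?_⟩
  linarith [expansion t, hdescent t ht hte]

/-- Escaping from saddle points (unconstrained-manifold case of Theorem 4.6):
if `vᵀSv < 0` for `S = ∇Φ(YYᵀ)`, then appending the column `t v` to `Y` yields
`Φ(Y_t Y_tᵀ) = Φ(YYᵀ) + t² vᵀSv + (σ/2) t⁴ ‖𝒜(vvᵀ)‖²`, and hence a strict descent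
for all small `t ≠ 0`. Here `⟨A, B⟩ = Tr(AB)`. -/
theorem escape_saddle_point
    (n m p : ℕ)
    (C : Matrix (Fin n) (Fin n) ℝ) (A : Fin m → Matrix (Fin n) (Fin n) ℝ)
    (b y : Fin m → ℝ) (σ : ℝ) (hσ : 0 ≤ σ)
    (hC : C.IsSymm) (hA : ∀ i, (A i).IsSymm)
    (Φ : Matrix (Fin n) (Fin n) ℝ → ℝ)
    (hΦ : ∀ X, Φ X = (C * X).trace - (∑ i, y i * ((A i * X).trace - b i)) +
      σ / 2 * ∑ i, ((A i * X).trace - b i) ^ 2)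
    (Y : Matrix (Fin n) (Fin p) ℝ)
    (X : Matrix (Fin n) (Fin n) ℝ) (hX : X = Y * Yᵀ)
    (S : Matrix (Fin n) (Fin n) ℝ)
    (hS : S = C - (∑ i, y i • A i) + σ • ∑ i, ((A i * X).trace - b i) • A i)
    (v : Fin n → ℝ) (hv : v ⬝ᵥ (S *ᵥ v) < 0) :
    (∀ t : ℝ,
      Φ (appendCol Y (t • v) * (appendCol Y (t • v))ᵀ) =
        Φ X + t ^ 2 * (v ⬝ᵥ (S *ᵥ v))
          + σ / 2 * t ^ 4 * ∑ i, ((A i * Matrix.vecMulVec v v).trace) ^ 2) ∧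
    ∃ ε > 0, ∀ t : ℝ, 0 < |t| → |t| < ε →
      Φ (appendCol Y (t • v) * (appendCol Y (t • v))ᵀ) < Φ X :=
  escape_saddle_point_general n m p C A b y σ Φ hΦ Y X hX S hS v hv
end

section
/- Let G be a real symmetric n×n matrix and Y ∈ ℝ^{n×p} with rank(Y) < p. If Tr(UᵀGU) ≥ 0 for every U ∈ ℝ^{n×p} satisfying U·Yᵀ = 0 (the n×n zero matrix), then G is positive semidefinite. -/
open Matrix BigOperators Finset

/-- Linear-algebraic core of Theorem 4.7: if `rank Y < p` and `Tr(Uᵀ G U) ≥ 0` for all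
`U` with `U Yᵀ = 0`, then the symmetric matrix `G` is positive semidefinite. -/
theorem psd_of_nonneg_on_rank_deficient_complement
    (n p : ℕ)
    (G : Matrix (Fin n) (Fin n) ℝ) (hG : G.IsSymm)
    (Y : Matrix (Fin n) (Fin p) ℝ) (hrank : Y.rank < p)
    (h : ∀ U : Matrix (Fin n) (Fin p) ℝ, U * Yᵀ = 0 → 0 ≤ (Uᵀ * G * U).trace) :
    G.PosSemidef := by
  -- find nonzero w in kernel of Y.mulVec
  have hker : ∃ w : Fin p → ℝ, Y.mulVec w = 0 ∧ w ≠ 0 := by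
    have hrn := LinearMap.finrank_range_add_finrank_ker (Y.mulVecLin)
    have hdom : Module.finrank ℝ (Fin p → ℝ) = p := by simp
    have hkpos : 0 < Module.finrank ℝ (LinearMap.ker Y.mulVecLin) := by
      have : Module.finrank ℝ (LinearMap.range Y.mulVecLin) = Y.rank := rfl
      omega
    haveI := Module.finrank_pos_iff.mp hkpos
    obtain ⟨⟨w, hw⟩, hwne⟩ := exists_ne (0 : LinearMap.ker Y.mulVecLin)
    refine ⟨w, ?_, ?_⟩
    · simpa [Matrix.mulVecLin_apply] using hw
    · intro h0
      exact hwne (by ext; simp [h0])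
  obtain ⟨w, hw0, hwne⟩ := hker
  have hwsq : 0 < ∑ j, w j * w j := by
    obtain ⟨j, hj⟩ : ∃ j, w j ≠ 0 := by
      by_contra hc; push_neg at hc; exact hwne (funext hc)
    exact Finset.sum_pos' (fun i _ => mul_self_nonneg _)
      ⟨j, Finset.mem_univ j, mul_self_pos.mpr hj⟩
  refine Matrix.posSemidef_iff_dotProduct_mulVec.mpr ⟨?_, ?_⟩
  · simpa [Matrix.IsHermitian] using hG.eq
  · intro v
    have key := h (Matrix.vecMulVec v w) (by
      ext i k
      simp only [Matrix.mul_apply, Matrix.vecMulVec_apply, Matrix.transpose_apply,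
        Matrix.zero_apply]
      have : ∑ j, v i * w j * Y k j = v i * Y.mulVec w k := by
        simp [Matrix.mulVec, dotProduct, mul_comm, mul_left_comm, Finset.mul_sum]
      rw [this, hw0]
      simp)
    have htr : ((Matrix.vecMulVec v w)ᵀ * G * Matrix.vecMulVec v w).trace
        = (∑ j, w j * w j) * (v ⬝ᵥ G.mulVec v) := by
      simp only [Matrix.trace, Matrix.diag_apply, Matrix.mul_apply, Matrix.transpose_apply,
        Matrix.vecMulVec_apply, dotProduct, Matrix.mulVec]
      rw [Finset.sum_mul]
      refine Finset.sum_congr rfl fun j _ => ?_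
      calc ∑ k, (∑ i, v i * w j * G i k) * (v k * w j)
          = ∑ k, ∑ i, (w j * w j) * (v i * (G i k * v k)) := by
            refine Finset.sum_congr rfl fun k _ => ?_
            rw [Finset.sum_mul]
            exact Finset.sum_congr rfl fun i _ => by ring
        _ = ∑ i, ∑ k, (w j * w j) * (v i * (G i k * v k)) := Finset.sum_comm
        _ = w j * w j * (v ⬝ᵥ fun i => ∑ k, G i k * v k) := by
            rw [dotProduct, Finset.mul_sum]
            refine Finset.sum_congr rfl fun i _ => ?_
            rw [Finset.mul_sum, Finset.mul_sum]
    rw [htr] at key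
    have hstar : star v = v := by simp
    rw [hstar]
    nlinarith [key, hwsq]
end
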